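/- arXiv:2312.10794 — 5 statements merged into one kernel-verified Lean document; each statement's English description precedes it below -/
import Mathlib

section
/- Any global maximizer of the interaction energy E_β over probability measures on S^{d-1} is a Dirac mass δ_{x*} at some point x* ∈ S^{d-1}. -/
open MeasureTheory
open scoped RealInnerProductSpace

/-- The interaction energy `E_β[μ] = (1/(2β)) ∬ e^{β⟨x,x'⟩} dμ(x) dμ(x')` on
probability measures over the unit sphere. -/
noncomputable def interactionEnergy {d : ℕ} (β : ℝ)
    (μ : Measure (Metric.sphere (0 : EuclideanSpace ℝ (Fin d)) 1)) : ℝ :=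
  (1 / (2 * β)) *
    ∫ x, ∫ y, Real.exp (β * ⟪(x : EuclideanSpace ℝ (Fin d)),
      (y : EuclideanSpace ℝ (Fin d))⟫) ∂μ ∂μ

/-! On the unit sphere `⟪x, y⟫ ≤ 1`, with equality only for `x = y`, so the integrand
`exp (β ⟪x, y⟫)` is at most `exp β`, while every Dirac mass has energy exactly `exp β / (2β)`.
The double integral of a maximizer is thus at least `exp β`, which forces `μ ⊗ μ` to be
concentrated on the diagonal, and a probability measure whose square lives on the diagonal is a
Dirac mass. -/

open Metric

namespace MeasureTheory.Measure

theorem exists_eq_dirac_of_ae_prod_eq {α : Type*} [MeasurableSpace α] [MeasurableSingletonClass α]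
    {μ : Measure α} [IsProbabilityMeasure μ] (h : ∀ᵐ p ∂μ.prod μ, p.1 = p.2) :
    ∃ x, μ = dirac x := by
  obtain ⟨x, hx⟩ := (ae_ae_of_ae_prod h).exists
  have hμ : μ = μ {x} • dirac x := by
    simpa using (ae_mem_finset_iff (s := {x})).1
      (hx.mono fun _ hy => Finset.mem_singleton.2 hy.symm)
  have hx_one : μ {x} = 1 := by simpa using congrArg (· Set.univ) hμ.symm
  exact ⟨x, by rwa [hx_one, one_smul] at hμ⟩

end MeasureTheory.Measure

section UnitSphere

variable {E : Type*} [NormedAddCommGroup E] [InnerProductSpace ℝ E]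

lemma real_inner_le_one_of_mem_sphere (x y : sphere (0 : E) 1) : ⟪(x : E), y⟫ ≤ 1 := by
  simpa [norm_eq_of_mem_sphere] using real_inner_le_norm (x : E) y

lemma real_inner_eq_one_iff_of_mem_sphere {x y : sphere (0 : E) 1} :
    ⟪(x : E), y⟫ = 1 ↔ x = y := by
  rw [inner_eq_one_iff_of_norm_eq_one (norm_eq_of_mem_sphere x) (norm_eq_of_mem_sphere y),
    Subtype.coe_inj]

variable [MeasurableSpace E] [BorelSpace E] [SecondCountableTopology E]

theorem ae_prod_eq_of_exp_le_integral_integral {β : ℝ} (hβ : 0 < β)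
    (μ : Measure (sphere (0 : E) 1)) [IsProbabilityMeasure μ]
    (h : Real.exp β ≤ ∫ x, ∫ y, Real.exp (β * ⟪(x : E), y⟫) ∂μ ∂μ) :
    ∀ᵐ p ∂μ.prod μ, p.1 = p.2 := by
  set F : sphere (0 : E) 1 × sphere (0 : E) 1 → ℝ := fun p => Real.exp (β * ⟪(p.1 : E), p.2⟫)
  have hF_le (p) : F p ≤ Real.exp β := by
    refine Real.exp_le_exp.2 ?_
    simpa using mul_le_mul_of_nonneg_left (real_inner_le_one_of_mem_sphere p.1 p.2) hβ.le
  have hF_int : Integrable F (μ.prod μ) := by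
    refine .of_bound (by fun_prop) (Real.exp β) (.of_forall fun p => ?_)
    rw [Real.norm_of_nonneg (Real.exp_nonneg _)]
    exact hF_le p
  have hF_eq : F =ᵐ[μ.prod μ] fun _ => Real.exp β := by
    refine (integral_eq_iff_of_ae_le hF_int (integrable_const _) (.of_forall hF_le)).1 ?_
    refine le_antisymm (integral_mono hF_int (integrable_const _) hF_le |>.trans_eq ?_) ?_
    · simp
    · simpa [integral_prod F hF_int] using h
  filter_upwards [hF_eq] with p hp
  rw [← real_inner_eq_one_iff_of_mem_sphere]
  simpa [F, hβ.ne'] using hp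

end UnitSphere

theorem interactionEnergy_dirac {d : ℕ} (β : ℝ) (x : sphere (0 : EuclideanSpace ℝ (Fin d)) 1) :
    interactionEnergy β (Measure.dirac x) = 1 / (2 * β) * Real.exp β := by
  simp [interactionEnergy]

theorem stmt_2_general {d : ℕ} (β : ℝ) (hβ : 0 < β)
    (μ : Measure (Metric.sphere (0 : EuclideanSpace ℝ (Fin d)) 1))
    [IsProbabilityMeasure μ]
    (hmax : ∀ ν : Measure (Metric.sphere (0 : EuclideanSpace ℝ (Fin d)) 1),
      IsProbabilityMeasure ν → interactionEnergy β ν ≤ interactionEnergy β μ) :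
    ∃ x : Metric.sphere (0 : EuclideanSpace ℝ (Fin d)) 1, μ = Measure.dirac x := by
  obtain ⟨x₀⟩ := nonempty_of_isProbabilityMeasure μ
  have h_energy := hmax (Measure.dirac x₀) inferInstance
  rw [interactionEnergy_dirac, interactionEnergy] at h_energy
  have h_exp_le := le_of_mul_le_mul_left h_energy (by positivity)
  exact Measure.exists_eq_dirac_of_ae_prod_eq
    (ae_prod_eq_of_exp_le_integral_integral hβ μ h_exp_le)

/-- Any global maximizer of the interaction energy `E_β` over probability measures
on `S^{d-1}` is a Dirac mass at some point of the sphere. -/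
theorem stmt_2 {d : ℕ} (hd : 2 ≤ d) (β : ℝ) (hβ : 0 < β)
    (μ : Measure (Metric.sphere (0 : EuclideanSpace ℝ (Fin d)) 1))
    [IsProbabilityMeasure μ]
    (hmax : ∀ ν : Measure (Metric.sphere (0 : EuclideanSpace ℝ (Fin d)) 1),
      IsProbabilityMeasure ν → interactionEnergy β ν ≤ interactionEnergy β μ) :
    ∃ x : Metric.sphere (0 : EuclideanSpace ℝ (Fin d)) 1, μ = Measure.dirac x :=
  stmt_2_general β hβ μ hmax
end

section
/- Let E_0(x_1,...,x_n) = (1/n) Σ_i Σ_j ⟨x_i, x_j⟩ on (S^{d-1})^n. If (x_1,...,x_n) is a critical point of E_0 at which the points are not all equal, then there exists a subset S ⊆ [n] with Σ_{i∈S} Σ_{j∈S^c} ⟨x_i, x_j⟩ ≤ -1. -/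
open scoped RealInnerProductSpace

open Finset

/-!
Write `s = ∑ j, x j`; criticality says `s = ⟪x i, s⟫ • x i` for every `i`. If `s = 0`, a single
point `x i` is cut from the rest, whose sum is `-x i`, so the cut sum is `⟪x i, -x i⟫ = -1`.
If `s ≠ 0`, every `x i` is a unit vector proportional to `s`, hence the points are all `±u` for a
single unit vector `u`; cutting `{k | x k = x i}` from its (nonempty) complement, every cross
term equals `-1`.
-/

theorem eq_or_eq_neg_of_smul_eq_smul {E : Type*} [NormedAddCommGroup E] [NormedSpace ℝ E]
    {x y : E} (hx : ‖x‖ = 1) (hy : ‖y‖ = 1) {a b : ℝ} (h : a • x = b • y) (hne : a • x ≠ 0) :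
    x = y ∨ x = -y := by
  have ha : a ≠ 0 := left_ne_zero_of_smul hne
  have hxy : x = (b / a) • y := by
    rw [div_eq_inv_mul, mul_smul, ← h, inv_smul_smul₀ ha]
  have hba : |b / a| = 1 := by
    rwa [hxy, norm_smul, hy, mul_one, Real.norm_eq_abs] at hx
  rcases (abs_eq zero_le_one).mp hba with h1 | h1
  · exact Or.inl (by rw [hxy, h1, one_smul])
  · exact Or.inr (by rw [hxy, h1, neg_one_smul])

section CutSum

variable {ι E : Type*} [Fintype ι] [DecidableEq ι] [NormedAddCommGroup E] [InnerProductSpace ℝ E]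

theorem sum_inner_compl_singleton_eq_neg_one {x : ι → E} (hsum : ∑ j, x j = 0) {i : ι}
    (hi : ‖x i‖ = 1) : ∑ k ∈ {i}, ∑ l ∈ ({i} : Finset ι)ᶜ, ⟪x k, x l⟫ = -1 := by
  have hcompl : ∑ l ∈ ({i} : Finset ι)ᶜ, x l = -x i := by
    rw [eq_neg_iff_add_eq_zero, add_comm, ← sum_singleton x i, sum_add_sum_compl, hsum]
  rw [sum_singleton, ← inner_sum, hcompl, inner_neg_right, real_inner_self_eq_norm_sq, hi]
  norm_num

theorem sum_inner_le_neg_one_of_forall_inner_eq_neg_one {x : ι → E} {S : Finset ι}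
    (hS : S.Nonempty) (hSc : Sᶜ.Nonempty) (h : ∀ k ∈ S, ∀ l ∈ Sᶜ, ⟪x k, x l⟫ = -1) :
    ∑ k ∈ S, ∑ l ∈ Sᶜ, ⟪x k, x l⟫ ≤ -1 := by
  have hcut : ∑ k ∈ S, ∑ l ∈ Sᶜ, ⟪x k, x l⟫ = -(#S * #Sᶜ : ℝ) := by
    rw [sum_congr rfl fun k hk => sum_congr rfl (h k hk)]
    simp
  have hcard : (1 : ℝ) ≤ #S * #Sᶜ := by
    exact_mod_cast Nat.one_le_iff_ne_zero.mpr (Nat.mul_ne_zero hS.card_ne_zero hSc.card_ne_zero)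
  linarith

theorem exists_sum_inner_le_neg_one_of_critical {x : ι → E} (hnorm : ∀ i, ‖x i‖ = 1)
    (hcrit : ∀ i, ∑ j, x j = ⟪x i, ∑ j, x j⟫ • x i) {i j : ι} (hij : x i ≠ x j) :
    ∃ S : Finset ι, ∑ k ∈ S, ∑ l ∈ Sᶜ, ⟪x k, x l⟫ ≤ -1 := by
  classical
  by_cases hs : ∑ k, x k = 0
  · exact ⟨{i}, (sum_inner_compl_singleton_eq_neg_one hs (hnorm i)).le⟩
  have hanti : ∀ k l, x l ≠ x k → x l = -x k := fun k l hlk =>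
    (eq_or_eq_neg_of_smul_eq_smul (hnorm l) (hnorm k) ((hcrit l).symm.trans (hcrit k))
      ((hcrit l) ▸ hs)).resolve_left hlk
  refine ⟨univ.filter (x · = x i), sum_inner_le_neg_one_of_forall_inner_eq_neg_one
    ⟨i, by simp⟩ ⟨j, by simpa using hij.symm⟩ fun k hk l hl => ?_⟩
  simp only [mem_compl, mem_filter, mem_univ, true_and] at hk hl
  rw [hanti k l (hk ▸ hl), inner_neg_right, real_inner_self_eq_norm_sq, hnorm k]
  norm_num

end CutSum

theorem stmt_9_general {d n : ℕ}
    (x : Fin n → EuclideanSpace ℝ (Fin d))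
    (hsphere : ∀ i, x i ∈ Metric.sphere (0 : EuclideanSpace ℝ (Fin d)) 1)
    (hcrit : ∀ i, (∑ j, x j) - ⟪x i, ∑ j, x j⟫ • x i = 0)
    (hneq : ¬ ∀ i j, x i = x j) :
    ∃ S : Finset (Fin n), ∑ i ∈ S, ∑ j ∈ Sᶜ, ⟪x i, x j⟫ ≤ -1 := by
  push Not at hneq
  obtain ⟨i, j, hij⟩ := hneq
  exact exists_sum_inner_le_neg_one_of_critical (fun k => mem_sphere_zero_iff_norm.mp (hsphere k))
    (fun k => sub_eq_zero.mp (hcrit k)) hij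

/-- If `(x_1,…,x_n)` is a critical point of `E_0(x) = (1/n) Σ_{i,j} ⟨x_i,x_j⟩` on
`(S^{d-1})^n` (i.e. the tangential projection of `Σ_j x_j` at each `x_i` vanishes)
at which the points are not all equal, then there is a subset `S ⊆ [n]` with
`Σ_{i∈S} Σ_{j∈Sᶜ} ⟨x_i, x_j⟩ ≤ -1`. -/
theorem stmt_9 {d n : ℕ} (hd : 2 ≤ d) (hn : 2 ≤ n)
    (x : Fin n → EuclideanSpace ℝ (Fin d))
    (hsphere : ∀ i, x i ∈ Metric.sphere (0 : EuclideanSpace ℝ (Fin d)) 1)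
    (hcrit : ∀ i, (∑ j, x j) - ⟪x i, ∑ j, x j⟫ • x i = 0)
    (hneq : ¬ ∀ i j, x i = x j) :
    ∃ S : Finset (Fin n), ∑ i ∈ S, ∑ j ∈ Sᶜ, ⟪x i, x j⟫ ≤ -1 :=
  stmt_9_general x hsphere hcrit hneq
end

section
/- For odd d, the negative identity matrix admits the representation -I_d = (1/(d-1)) Σ_{j=1}^{d} B_j², where B_j is the d×d block-diagonal matrix built from repeated 2×2 blocks [[0,1],[-1,0]] except that the j-th diagonal position is replaced by a 1×1 zero block; each B_j is skew-symmetric. -/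
open Matrix
/-- The skew-symmetric matrix `B_j`: block-diagonal with repeated `2×2` blocks
`[[0,1],[-1,0]]` placed on the indices other than `j` (taken in increasing order
and paired consecutively), with a `1×1` zero block at position `j`. -/
def Bmat (d : ℕ) (j : Fin d) : Matrix (Fin d) (Fin d) ℝ :=
  fun i k =>
    if i = j ∨ k = j then 0
    else
      let ri : ℕ := if (i : ℕ) < (j : ℕ) then (i : ℕ) else (i : ℕ) - 1
      let rk : ℕ := if (k : ℕ) < (j : ℕ) then (k : ℕ) else (k : ℕ) - 1
      if rk = ri + 1 ∧ ri % 2 = 0 then 1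
      else if ri = rk + 1 ∧ rk % 2 = 0 then -1
      else 0

/-!
Deleting the `j`-th row and column of `B_j` leaves the block-diagonal matrix `J ⊕ ⋯ ⊕ J` of even
size `d - 1`, where `J = [[0,1],[-1,0]]` satisfies `J² = -1`. As `B_j` vanishes on row and column
`j`, this gives `B_j² = E_jj - 1`, and summing over `j` gives `Σ_j B_j² = 1 - d = -(d - 1)`.
-/

namespace Matrix

section ExtendByZero

variable {R : Type*} {n : ℕ}

theorem mul_eq_submatrix_succAbove_mul_of_col_eq_zero [NonUnitalNonAssocSemiring R]
    {l o : Type*} (j : Fin (n + 1)) (A : Matrix l (Fin (n + 1)) R) (N : Matrix (Fin (n + 1)) o R)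
    (hA : ∀ i, A i j = 0) :
    A * N = A.submatrix id j.succAbove * N.submatrix j.succAbove id := by
  ext i k
  simp [mul_apply, Fin.sum_univ_succAbove _ j, hA]

theorem mul_self_eq_single_sub_one_of_submatrix_succAbove [Ring R] (j : Fin (n + 1))
    {B : Matrix (Fin (n + 1)) (Fin (n + 1)) R} (hrow : ∀ k, B j k = 0) (hcol : ∀ i, B i j = 0)
    (hsq : B.submatrix j.succAbove j.succAbove * B.submatrix j.succAbove j.succAbove = -1) :
    B * B = single j j 1 - 1 := by
  ext i k
  rcases j.eq_self_or_eq_succAbove i with rfl | ⟨a, rfl⟩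
  · simp [mul_apply, hrow, one_apply, single_apply]
  rcases j.eq_self_or_eq_succAbove k with rfl | ⟨b, rfl⟩
  · simp [mul_apply, hcol, Fin.succAbove_ne]
  have hab := congrFun (congrFun hsq a) b
  rw [mul_eq_submatrix_succAbove_mul_of_col_eq_zero j B B hcol]
  simp_all [mul_apply, one_apply]

end ExtendByZero

variable {R : Type*} [Ring R]

def rotBlock (R : Type*) [Ring R] : Matrix (Fin 2) (Fin 2) R := !![0, 1; -1, 0]

theorem rotBlock_mul_self : rotBlock R * rotBlock R = -1 := by
  ext i j
  fin_cases i <;> fin_cases j <;> simp [rotBlock]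

theorem rotBlock_apply (r s : Fin 2) :
    rotBlock R r s =
      if (r : ℕ) = 0 ∧ (s : ℕ) = 1 then 1 else if (r : ℕ) = 1 ∧ (s : ℕ) = 0 then -1 else 0 := by
  fin_cases r <;> fin_cases s <;> simp [rotBlock]

def rotBlocks (R : Type*) [Ring R] (m : ℕ) : Matrix (Fin (m * 2)) (Fin (m * 2)) R :=
  let e := (Equiv.prodComm (Fin 2) (Fin m)).trans finProdFinEquiv
  reindex e e (blockDiagonal fun _ : Fin m => rotBlock R)

theorem rotBlocks_mul_self (m : ℕ) : rotBlocks R m * rotBlocks R m = -1 := by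
  have hneg : (fun _ : Fin m => (-1 : Matrix (Fin 2) (Fin 2) R)) = -1 := rfl
  simp only [rotBlocks, reindex_apply, submatrix_mul_equiv, ← blockDiagonal_mul,
    rotBlock_mul_self]
  rw [hneg, blockDiagonal_neg, blockDiagonal_one]
  exact congrArg Neg.neg (submatrix_one_equiv _)

theorem rotBlocks_apply (m : ℕ) (a b : Fin (m * 2)) :
    rotBlocks R m a b =
      if (b : ℕ) = a + 1 ∧ (a : ℕ) % 2 = 0 then 1
      else if (a : ℕ) = b + 1 ∧ (b : ℕ) % 2 = 0 then -1 else 0 := by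
  simp only [rotBlocks, reindex_apply, submatrix_apply, blockDiagonal_apply, rotBlock_apply,
    Equiv.symm_trans_apply, finProdFinEquiv_symm_apply, Equiv.prodComm_symm, Equiv.prodComm_apply,
    Prod.fst_swap, Prod.snd_swap, Fin.ext_iff, Fin.coe_divNat, Fin.coe_modNat]
  grind

end Matrix

theorem Fin.ite_val_succAbove_lt {n : ℕ} (j : Fin (n + 1)) (a : Fin n) :
    (if (j.succAbove a : ℕ) < j then (j.succAbove a : ℕ) else (j.succAbove a : ℕ) - 1) = a := by
  rcases lt_or_ge a.castSucc j with h | h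
  · rw [succAbove_of_castSucc_lt _ _ h]
    simp_all [Fin.lt_def]
  · rw [succAbove_of_le_castSucc _ _ h]
    simp only [Fin.le_def, Fin.val_castSucc] at h
    simp only [Fin.val_succ]
    split_ifs <;> omega

theorem Bmat_transpose (d : ℕ) (j : Fin d) : (Bmat d j)ᵀ = -Bmat d j := by
  ext i k
  rw [transpose_apply, neg_apply]
  unfold Bmat
  simp only [Fin.ext_iff]
  split_ifs <;> first | omega | norm_num

theorem Bmat_apply_self_left (d : ℕ) (j k : Fin d) : Bmat d j j k = 0 := by
  simp [Bmat]

theorem Bmat_apply_self_right (d : ℕ) (j i : Fin d) : Bmat d j i j = 0 := by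
  simp [Bmat]

theorem Bmat_submatrix_succAbove (m : ℕ) (j : Fin (m * 2 + 1)) :
    (Bmat (m * 2 + 1) j).submatrix j.succAbove j.succAbove = rotBlocks ℝ m := by
  ext a b
  simp only [submatrix_apply, rotBlocks_apply, Bmat, Fin.succAbove_ne, or_self, if_false,
    Fin.ite_val_succAbove_lt]

theorem Bmat_sq_of_odd {d : ℕ} (hd : Odd d) (j : Fin d) : Bmat d j ^ 2 = single j j 1 - 1 := by
  obtain ⟨m, rfl⟩ : ∃ m, d = m * 2 + 1 := by obtain ⟨m, rfl⟩ := hd; exact ⟨m, by ring⟩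
  rw [sq]
  exact mul_self_eq_single_sub_one_of_submatrix_succAbove j (Bmat_apply_self_left _ j)
    (Bmat_apply_self_right _ j) (by rw [Bmat_submatrix_succAbove, rotBlocks_mul_self])

theorem sum_Bmat_sq_of_odd {d : ℕ} (hd : Odd d) :
    ∑ j : Fin d, Bmat d j ^ 2 = -(((d : ℝ) - 1) • (1 : Matrix (Fin d) (Fin d) ℝ)) := by
  simp only [Bmat_sq_of_odd hd, Finset.sum_sub_distrib, sum_single_one, Finset.sum_const,
    Finset.card_univ, Fintype.card_fin]
  module

/-- For odd `d` (with `d ≥ 2`, hence `d ≥ 3`), each `B_j` is skew-symmetric and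
`-I_d = (1/(d-1)) Σ_{j=1}^d B_j²`. -/
theorem stmt_10 (d : ℕ) (hd : 2 ≤ d) (hodd : Odd d) :
    (∀ j : Fin d, (Bmat d j)ᵀ = -(Bmat d j)) ∧
      -(1 : Matrix (Fin d) (Fin d) ℝ) =
        ((d : ℝ) - 1)⁻¹ • ∑ j : Fin d, (Bmat d j) ^ 2 := by
  refine ⟨Bmat_transpose d, ?_⟩
  have hd' : (d : ℝ) - 1 ≠ 0 := by
    have : (2 : ℝ) ≤ d := by exact_mod_cast hd
    linarith
  rw [sum_Bmat_sq_of_odd hodd, smul_neg, smul_smul, inv_mul_cancel₀ hd', one_smul]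
end

section
/- Let n ≥ 2, β ≥ 0, and let γ be the solution of the ODE γ'(t) = 2 e^{βγ(t)}(1-γ(t))((n-1)γ(t)+1) / (e^β + (n-1)e^{βγ(t)}) with γ(0) = 0. Then γ is non-decreasing, 0 ≤ γ(t) ≤ 1 for all t ≥ 0, γ(n e^β / 2) ≥ 1/2, and for all t ≥ n e^β / 2, 1 - γ(t) ≤ (1/2) exp( n²e^β / (2(n + e^{β/2})) - n t / (n + e^{β/2}) ). -/
/-!
The field is nonnegative just below `0` and nonpositive just above `1`, so `γ` cannot leave
`[0, 1]`, and there the field is nonnegative, so `γ` is non-decreasing. While `γ ≤ 1/2` the speed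
is at least `1 / (n e^β)`, so `γ` reaches `1/2` by time `n e^β / 2`; from then on
`γ' ≥ n (1 - γ) / (n + e^{β/2})`, and `1 - γ` decays exponentially by Grönwall's argument.
-/

open Set Real

theorem le_image_of_deriv_nonneg_near_boundary {f f' : ℝ → ℝ} {a c δ : ℝ} (hδ : 0 < δ)
    (hf : ∀ x ∈ Ici a, HasDerivAt f (f' x) x) (ha : c ≤ f a)
    (hf' : ∀ x ∈ Ici a, f x ∈ Ioo (c - δ) c → 0 ≤ f' x) : ∀ x ∈ Ici a, c ≤ f x := by
  intro b hb
  refine le_of_forall_pos_lt_add fun η hη => ?_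
  -- `f` stays above the fence `c - ε (1 + (x - a))`: on `[a, b]` the fence lies within `δ`
  -- of `c`, where `f' ≥ 0` beats the fence's slope `-ε`
  set L := 1 + (b - a) with hLdef
  have hL : 0 < L := by simp only [mem_Ici] at hb; positivity
  set ε := min η δ / (2 * L)
  have hε : 0 < ε := by positivity
  have hεL : ε * L = min η δ / 2 := by simp only [ε]; field_simp
  have hfence : ∀ x ∈ Icc a b, c - ε * (1 + (x - a)) ≤ f x := by
    have hfence' : ∀ x, HasDerivAt (fun x => c - ε * (1 + (x - a))) (-ε) x := fun x => by
      simpa using (((hasDerivAt_id x).sub_const a).const_add 1).const_mul ε |>.const_sub c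
    refine image_le_of_deriv_right_lt_deriv_boundary' (f' := fun _ => -ε)
      (fun x _ => (hfence' x).continuousAt.continuousWithinAt)
      (fun x _ => (hfence' x).hasDerivWithinAt) (by simp; linarith)
      (fun x hx => (hf x hx.1).continuousAt.continuousWithinAt)
      (fun x hx => (hf x hx.1).hasDerivWithinAt) fun x hx hfx => ?_
    have hεx : ε * (1 + (x - a)) ≤ ε * L :=
      mul_le_mul_of_nonneg_left (by linarith [hx.2]) hε.le
    have hεx0 : 0 < ε * (1 + (x - a)) := mul_pos hε (by linarith [hx.1])
    have := min_le_right η δ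
    have := hf' x hx.1 ⟨by linarith, by linarith⟩
    linarith
  have := hfence b ⟨hb, le_rfl⟩
  have := min_le_left η δ
  linarith

theorem image_le_of_deriv_nonpos_near_boundary {f f' : ℝ → ℝ} {a c δ : ℝ} (hδ : 0 < δ)
    (hf : ∀ x ∈ Ici a, HasDerivAt f (f' x) x) (ha : f a ≤ c)
    (hf' : ∀ x ∈ Ici a, f x ∈ Ioo c (c + δ) → f' x ≤ 0) : ∀ x ∈ Ici a, f x ≤ c := by
  have := le_image_of_deriv_nonneg_near_boundary (f := -f) (f' := -f') (c := -c) hδ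
    (fun x hx => (hf x hx).neg) (by simpa using ha) fun x hx hfx => by
      simp only [Pi.neg_apply, mem_Ioo] at hfx ⊢
      exact neg_nonneg.2 (hf' x hx ⟨by linarith, by linarith⟩)
  exact fun x hx => by simpa using this x hx

theorem image_le_mul_exp_of_deriv_le_neg_mul {u u' : ℝ → ℝ} {a T : ℝ}
    (hu : ∀ s ∈ Ici T, HasDerivAt u (u' s) s) (hle : ∀ s ∈ Ici T, u' s ≤ -a * u s) :
    ∀ t ∈ Ici T, u t ≤ u T * exp (-a * (t - T)) := by
  have hG : ∀ s ∈ Ici T, HasDerivAt (fun s => u s * exp (a * s))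
      ((u' s + a * u s) * exp (a * s)) s := fun s hs => by
    have hexp : HasDerivAt (fun s => exp (a * s)) (exp (a * s) * a) s := by
      simpa using ((hasDerivAt_id s).const_mul a).exp
    exact ((hu s hs).mul hexp).congr_deriv (by ring)
  have hanti : AntitoneOn (fun s => u s * exp (a * s)) (Ici T) :=
    antitoneOn_of_hasDerivWithinAt_nonpos (convex_Ici T)
      (fun s hs => (hG s hs).continuousAt.continuousWithinAt)
      (fun s hs => (hG s (interior_subset hs)).hasDerivWithinAt)
      fun s hs => mul_nonpos_of_nonpos_of_nonneg
        (by linarith [hle s (interior_subset hs)]) (exp_pos _).le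
  intro t ht
  calc u t = u t * exp (a * t) * exp (-(a * t)) := by rw [mul_assoc, ← exp_add]; simp
    _ ≤ u T * exp (a * T) * exp (-(a * t)) :=
        mul_le_mul_of_nonneg_right (hanti self_mem_Ici ht ht) (exp_pos _).le
    _ = u T * exp (-a * (t - T)) := by rw [mul_assoc, ← exp_add]; ring_nf

noncomputable def attentionField (n β x : ℝ) : ℝ :=
  2 * exp (β * x) * (1 - x) * ((n - 1) * x + 1) / (exp β + (n - 1) * exp (β * x))

section attentionField

variable {n β x : ℝ}

lemma attentionField_denom_pos (hn : 1 ≤ n) : 0 < exp β + (n - 1) * exp (β * x) := by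
  have := exp_pos β
  have := exp_pos (β * x)
  nlinarith

lemma attentionField_nonneg (hn : 1 ≤ n) (hx : 0 ≤ (n - 1) * x + 1) (hx1 : x ≤ 1) :
    0 ≤ attentionField n β x := by
  unfold attentionField
  have := attentionField_denom_pos (β := β) (x := x) hn
  have := exp_pos (β * x)
  have : 0 ≤ 1 - x := by linarith
  positivity

lemma attentionField_nonpos (hn : 1 ≤ n) (hx : 1 ≤ x) : attentionField n β x ≤ 0 := by
  unfold attentionField
  refine div_nonpos_of_nonpos_of_nonneg ?_ (attentionField_denom_pos hn).le
  have : 0 ≤ (n - 1) * x + 1 := by nlinarith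
  have := exp_pos (β * x)
  have : 1 - x ≤ 0 := by linarith
  exact mul_nonpos_of_nonpos_of_nonneg
    (mul_nonpos_of_nonneg_of_nonpos (by positivity) this) (by positivity)

lemma inv_le_attentionField (hn : 1 ≤ n) (hβ : 0 ≤ β) (hx0 : 0 ≤ x) (hx : x ≤ 1 / 2) :
    (n * exp β)⁻¹ ≤ attentionField n β x := by
  have hE1 : 1 ≤ exp (β * x) := one_le_exp (mul_nonneg hβ hx0)
  have hEβ : exp (β * x) ≤ exp β := exp_le_exp.2 (by nlinarith)
  have hnum : 1 ≤ 2 * exp (β * x) * (1 - x) * ((n - 1) * x + 1) := by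
    have h1 : 1 ≤ 2 * exp (β * x) * (1 - x) := by nlinarith
    have h2 : 1 ≤ (n - 1) * x + 1 := by nlinarith
    nlinarith
  have hden : exp β + (n - 1) * exp (β * x) ≤ n * exp β := by nlinarith
  rw [← one_div]
  exact div_le_div₀ (by linarith) hnum (attentionField_denom_pos hn) hden

lemma mul_one_sub_le_attentionField (hn : 1 ≤ n) (hβ : 0 ≤ β) (hx : 1 / 2 ≤ x) (hx1 : x ≤ 1) :
    n / (n + exp (β / 2)) * (1 - x) ≤ attentionField n β x := by
  set E := exp (β / 2)
  have hE : 0 < E := exp_pos _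
  have hEE : exp β = E * E := by rw [← exp_add]; ring_nf
  have hEx : E ≤ exp (β * x) := exp_le_exp.2 (by nlinarith)
  -- `e^β = e^{β/2} e^{β/2} ≤ e^{β/2} e^{βx}` once `x ≥ 1/2`
  have hden : exp β + (n - 1) * exp (β * x) ≤ (n + E) * exp (β * x) := by nlinarith
  have hnum : n * exp (β * x) * (1 - x) ≤ 2 * exp (β * x) * (1 - x) * ((n - 1) * x + 1) := by
    have : n ≤ 2 * ((n - 1) * x + 1) := by nlinarith
    have := exp_pos (β * x)
    have : 0 ≤ exp (β * x) * (1 - x) := by nlinarith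
    nlinarith
  unfold attentionField
  rw [div_mul_eq_mul_div, div_le_div_iff₀ (by positivity) (attentionField_denom_pos hn)]
  have : 0 ≤ n * (1 - x) := by nlinarith
  calc n * (1 - x) * (exp β + (n - 1) * exp (β * x))
      ≤ n * (1 - x) * ((n + E) * exp (β * x)) := mul_le_mul_of_nonneg_left hden this
    _ = n * exp (β * x) * (1 - x) * (n + E) := by ring
    _ ≤ _ := mul_le_mul_of_nonneg_right hnum (by positivity)

end attentionField

section solution

variable {n β : ℝ} {γ : ℝ → ℝ}

lemma mem_Icc_of_hasDerivAt_attentionField (hn : 1 ≤ n) (h0 : γ 0 = 0)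
    (hγ : ∀ t ∈ Ici 0, HasDerivAt γ (attentionField n β (γ t)) t) :
    ∀ t ∈ Ici 0, γ t ∈ Icc 0 1 := by
  have hnpos : 0 < n := by linarith
  intro t ht
  constructor
  · refine le_image_of_deriv_nonneg_near_boundary (inv_pos.2 hnpos) hγ h0.ge
      (fun s _ hs => attentionField_nonneg hn ?_ (by linarith [hs.2])) t ht
    have := mul_lt_mul_of_pos_left hs.1 hnpos
    rw [zero_sub, mul_neg, mul_inv_cancel₀ hnpos.ne'] at this
    nlinarith [hs.2]
  · exact image_le_of_deriv_nonpos_near_boundary one_pos hγ (by rw [h0]; norm_num)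
      (fun s _ hs => attentionField_nonpos hn hs.1.le) t ht

lemma monotoneOn_of_hasDerivAt_attentionField (hn : 1 ≤ n) (h0 : γ 0 = 0)
    (hγ : ∀ t ∈ Ici 0, HasDerivAt γ (attentionField n β (γ t)) t) :
    MonotoneOn γ (Ici 0) := by
  have hmem := mem_Icc_of_hasDerivAt_attentionField hn h0 hγ
  refine monotoneOn_of_hasDerivWithinAt_nonneg (convex_Ici 0)
    (fun t ht => (hγ t ht).continuousAt.continuousWithinAt)
    (fun t ht => (hγ t (interior_subset ht)).hasDerivWithinAt) fun t ht => ?_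
  obtain ⟨h0t, h1t⟩ := hmem t (interior_subset ht)
  exact attentionField_nonneg hn (by nlinarith) h1t

lemma half_le_of_hasDerivAt_attentionField (hn : 1 ≤ n) (hβ : 0 ≤ β) (h0 : γ 0 = 0)
    (hγ : ∀ t ∈ Ici 0, HasDerivAt γ (attentionField n β (γ t)) t) :
    1 / 2 ≤ γ (n * exp β / 2) := by
  set T := n * exp β / 2
  have hT : 0 ≤ T := by have := exp_pos β; positivity
  have hmem := mem_Icc_of_hasDerivAt_attentionField hn h0 hγ
  have hmono := monotoneOn_of_hasDerivAt_attentionField hn h0 hγ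
  by_contra! hlt
  have hlin : (n * exp β)⁻¹ * T ≤ γ T := by
    refine image_le_of_deriv_right_le_deriv_boundary (f := fun t => (n * exp β)⁻¹ * t)
      (f' := fun _ => (n * exp β)⁻¹) (by fun_prop)
      (fun t _ => ((hasDerivAt_id t).const_mul _).hasDerivWithinAt.congr_deriv (mul_one _))
      (by simp [h0]) (fun t ht => (hγ t ht.1).continuousAt.continuousWithinAt)
      (fun t ht => (hγ t ht.1).hasDerivWithinAt) (fun t ht => ?_) ⟨hT, le_rfl⟩
    exact inv_le_attentionField hn hβ (hmem t ht.1).1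
      ((hmono ht.1 hT ht.2.le).trans hlt.le)
  have : (n * exp β)⁻¹ * T = 1 / 2 := by
    simp only [T]; field_simp
  linarith

lemma one_sub_le_of_hasDerivAt_attentionField (hn : 1 ≤ n) (hβ : 0 ≤ β) (h0 : γ 0 = 0)
    (hγ : ∀ t ∈ Ici 0, HasDerivAt γ (attentionField n β (γ t)) t) (t : ℝ)
    (ht : n * exp β / 2 ≤ t) :
    1 - γ t ≤ 1 / 2 * exp (n ^ 2 * exp β / (2 * (n + exp (β / 2))) - n * t / (n + exp (β / 2))) := by
  set T := n * exp β / 2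
  have hT : 0 ≤ T := by have := exp_pos β; positivity
  have hmem := mem_Icc_of_hasDerivAt_attentionField hn h0 hγ
  have hmono := monotoneOn_of_hasDerivAt_attentionField hn h0 hγ
  have hhalf := half_le_of_hasDerivAt_attentionField hn hβ h0 hγ
  have hdecay := image_le_mul_exp_of_deriv_le_neg_mul (u := fun s => 1 - γ s)
    (a := n / (n + exp (β / 2))) (T := T)
    (fun s hs => ((hγ s (hT.trans hs)).const_sub 1)) (fun s hs => ?_) t ht
  · have hexp : -(n / (n + exp (β / 2))) * (t - T) =
        n ^ 2 * exp β / (2 * (n + exp (β / 2))) - n * t / (n + exp (β / 2)) := by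
      have := exp_pos (β / 2)
      simp only [T]; field_simp; ring
    rw [← hexp]
    exact hdecay.trans (mul_le_mul_of_nonneg_right (by linarith) (exp_pos _).le)
  · have hs0 := hT.trans hs
    have := mul_one_sub_le_attentionField hn hβ (hhalf.trans (hmono hT hs0 hs)) (hmem s hs0).2
    linarith

end solution

/-- Properties of the solution of the scalar ODE
`γ' = 2 e^{βγ}(1-γ)((n-1)γ+1)/(e^β + (n-1)e^{βγ})`, `γ(0) = 0`, describing the
common inner product of initially orthogonal particles under the self-attention
dynamics: `γ` is non-decreasing, stays in `[0,1]`, satisfies `γ(n e^β/2) ≥ 1/2`,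
and converges to `1` exponentially. -/
theorem stmt_14 (n : ℕ) (hn : 2 ≤ n) (β : ℝ) (hβ : 0 ≤ β) (γ : ℝ → ℝ)
    (hinit : γ 0 = 0)
    (hode : ∀ t ∈ Ici (0:ℝ), HasDerivAt γ
      (2 * exp (β * γ t) * (1 - γ t) * (((n : ℝ) - 1) * γ t + 1) /
        (exp β + ((n : ℝ) - 1) * exp (β * γ t))) t) :
    MonotoneOn γ (Ici (0:ℝ)) ∧
    (∀ t ∈ Ici (0:ℝ), 0 ≤ γ t ∧ γ t ≤ 1) ∧
    1 / 2 ≤ γ ((n : ℝ) * exp β / 2) ∧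
    ∀ t, (n : ℝ) * exp β / 2 ≤ t →
      1 - γ t ≤ (1 / 2) * exp ((n : ℝ) ^ 2 * exp β / (2 * ((n : ℝ) + exp (β / 2)))
        - (n : ℝ) * t / ((n : ℝ) + exp (β / 2))) := by
  have hn1 : (1 : ℝ) ≤ n := by exact_mod_cast (by omega : 1 ≤ n)
  have hγ : ∀ t ∈ Ici (0:ℝ), HasDerivAt γ (attentionField n β (γ t)) t := hode
  exact ⟨monotoneOn_of_hasDerivAt_attentionField hn1 hinit hγ,
    mem_Icc_of_hasDerivAt_attentionField hn1 hinit hγ,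
    half_le_of_hasDerivAt_attentionField hn1 hβ hinit hγ,
    one_sub_le_of_hasDerivAt_attentionField hn1 hβ hinit hγ⟩
end

section
/- Let g(τ) = e^{β cos τ} ((d-1) cos τ - β sin² τ) for β > 0 and d ≥ 2, and let τ*_β ∈ [0, π/2) be the unique solution in [0, π/2) of β sin²(τ) = (d-1) cos(τ). Then g(τ) < 0 for all τ ∈ [0, π] with τ > τ*_β, and τ*_β is strictly decreasing as a function of β with τ*_β · sqrt(β/(d-1)) → 1 as β → ∞. -/
/-!
On `[0, π/2]` the function `τ ↦ β sin² τ - c cos τ` is strictly increasing (for `β ≥ 0` and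
`c = d - 1 > 0`), so it has at most one zero there and is positive to the right of it; on
`(π/2, π]` the bracket `c cos τ - β sin² τ` is negative anyway because `cos τ < 0`. If `β₁ < β₂`,
then at the root `τ₁` of `β₁` one has `β₂ sin² τ₁ - c cos τ₁ = (β₂ - β₁) sin² τ₁ > 0`, so the root
`τ₂` of `β₂` lies strictly to the left. Finally `sin² τ ≤ c / β` forces `τ → 0`, and the root
equation gives `τ √(β / c) = √(cos τ) / sinc τ → 1`.
-/

open Set Real Filter

/-- The Hessian kernel `g(τ) = e^{β cos τ}((d-1) cos τ - β sin² τ)`. -/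
noncomputable def hessKernel (d : ℕ) (β τ : ℝ) : ℝ :=
  exp (β * cos τ) * (((d : ℝ) - 1) * cos τ - β * sin τ ^ 2)

open Topology

section CriticalAngle

variable {β c τ : ℝ}

theorem strictMonoOn_mul_sin_sq_sub_mul_cos (hβ : 0 ≤ β) (hc : 0 < c) :
    StrictMonoOn (fun τ => β * sin τ ^ 2 - c * cos τ) (Icc 0 (π / 2)) := by
  intro a ha b hb hab
  have hsin : sin a ≤ sin b :=
    (strictMonoOn_sin ⟨by linarith [pi_pos, ha.1], ha.2⟩ ⟨by linarith [pi_pos, hb.1], hb.2⟩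
      hab).le
  have hcos : cos b < cos a :=
    cos_lt_cos_of_nonneg_of_le_pi ha.1 (by linarith [pi_pos, hb.2]) hab
  have hsin_nonneg : 0 ≤ sin a := sin_nonneg_of_nonneg_of_le_pi ha.1 (by linarith [pi_pos, ha.2])
  have hβsin : β * sin a ^ 2 ≤ β * sin b ^ 2 := by gcongr
  have hccos : c * cos b < c * cos a := by gcongr
  linarith

theorem eq_of_mul_sin_sq_eq_mul_cos {τ' : ℝ} (hβ : 0 ≤ β) (hc : 0 < c)
    (hτ : τ ∈ Icc 0 (π / 2)) (hτ' : τ' ∈ Icc 0 (π / 2))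
    (hroot : β * sin τ ^ 2 = c * cos τ) (hroot' : β * sin τ' ^ 2 = c * cos τ') : τ = τ' :=
  (strictMonoOn_mul_sin_sq_sub_mul_cos hβ hc).injOn hτ hτ' <| by
    simp only [hroot, hroot', sub_self]

theorem mul_cos_sub_mul_sin_sq_neg {τ₀ : ℝ} (hβ : 0 ≤ β) (hc : 0 < c)
    (hτ₀ : τ₀ ∈ Icc 0 (π / 2)) (hroot : β * sin τ₀ ^ 2 = c * cos τ₀)
    (hlt : τ₀ < τ) (hτπ : τ ≤ π) : c * cos τ - β * sin τ ^ 2 < 0 := by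
  rcases le_or_gt τ (π / 2) with hτ | hτ
  · have := strictMonoOn_mul_sin_sq_sub_mul_cos hβ hc hτ₀ ⟨hτ₀.1.trans hlt.le, hτ⟩ hlt
    simp only [hroot, sub_self] at this
    linarith
  · have hcos : cos τ < 0 := cos_neg_of_pi_div_two_lt_of_lt hτ (by linarith [pi_pos])
    nlinarith [sq_nonneg (sin τ)]

theorem cos_pos_of_mem_Ico (hτ : τ ∈ Ico 0 (π / 2)) : 0 < cos τ :=
  cos_pos_of_mem_Ioo ⟨by linarith [pi_pos, hτ.1], hτ.2⟩

theorem sin_pos_of_root (hc : 0 < c) (hτ : τ ∈ Ico 0 (π / 2))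
    (hroot : β * sin τ ^ 2 = c * cos τ) :
    0 < sin τ := by
  have hsq : 0 < β * sin τ ^ 2 := hroot ▸ mul_pos hc (cos_pos_of_mem_Ico hτ)
  have hne : sin τ ≠ 0 := by
    rintro h
    simp [h] at hsq
  exact (sin_nonneg_of_nonneg_of_le_pi hτ.1 (by linarith [pi_pos, hτ.2])).lt_of_ne' hne

theorem pos_of_root (hc : 0 < c) (hτ : τ ∈ Ico 0 (π / 2))
    (hroot : β * sin τ ^ 2 = c * cos τ) :
    0 < τ := by
  refine hτ.1.lt_of_ne ?_
  rintro rfl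
  simpa using sin_pos_of_root hc hτ hroot

theorem root_le_pi_div_two_mul_sqrt (hβ : 0 < β) (hc : 0 < c) (hτ : τ ∈ Ico 0 (π / 2))
    (hroot : β * sin τ ^ 2 = c * cos τ) :
    τ ≤ π / 2 * √(c / β) := by
  have hsin : sin τ ≤ √(c / β) := by
    rw [le_sqrt (sin_pos_of_root hc hτ hroot).le (by positivity), le_div_iff₀ hβ]
    nlinarith [cos_le_one τ]
  calc τ = π / 2 * (2 / π * τ) := by field_simp
    _ ≤ π / 2 * sin τ := by gcongr; exact mul_le_sin hτ.1 hτ.2.le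
    _ ≤ π / 2 * √(c / β) := by gcongr

theorem root_mul_sqrt_eq_sqrt_cos_div_sinc (hc : 0 < c) (hτ : τ ∈ Ico 0 (π / 2))
    (hroot : β * sin τ ^ 2 = c * cos τ) :
    τ * √(β / c) = √(cos τ) / sinc τ := by
  have hsin := sin_pos_of_root hc hτ hroot
  have hratio : β / c = cos τ / sin τ ^ 2 := by
    rw [div_eq_div_iff hc.ne' (by positivity)]
    linarith
  rw [hratio, sqrt_div (cos_pos_of_mem_Ico hτ).le, sqrt_sq hsin.le,
    sinc_of_ne_zero (pos_of_root hc hτ hroot).ne']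
  field_simp

theorem root_lt_root_of_lt {β₁ β₂ τ₁ τ₂ : ℝ} (hβ₁ : 0 < β₁) (hβ : β₁ < β₂) (hc : 0 < c)
    (hτ₁ : τ₁ ∈ Ico 0 (π / 2)) (hτ₂ : τ₂ ∈ Ico 0 (π / 2))
    (hroot₁ : β₁ * sin τ₁ ^ 2 = c * cos τ₁) (hroot₂ : β₂ * sin τ₂ ^ 2 = c * cos τ₂) :
    τ₂ < τ₁ := by
  by_contra! hle
  have hmono := (strictMonoOn_mul_sin_sq_sub_mul_cos (hβ₁.trans hβ).le hc).monotoneOn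
    (Ico_subset_Icc_self hτ₁) (Ico_subset_Icc_self hτ₂) hle
  have hgap := mul_lt_mul_of_pos_right hβ (pow_pos (sin_pos_of_root hc hτ₁ hroot₁) 2)
  linarith

theorem tendsto_root_atTop_zero {τstar : ℝ → ℝ} (hc : 0 < c)
    (hmem : ∀ β > 0, τstar β ∈ Ico 0 (π / 2))
    (hroot : ∀ β > 0, β * sin (τstar β) ^ 2 = c * cos (τstar β)) :
    Tendsto τstar atTop (𝓝 0) := by
  have hbound : Tendsto (fun β => π / 2 * √(c / β)) atTop (𝓝 0) := by
    simpa using ((tendsto_const_nhds.div_atTop tendsto_id).sqrt).const_mul (π / 2)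
  refine squeeze_zero' ?_ ?_ hbound <;> filter_upwards [eventually_gt_atTop 0] with β hβ
  · exact (hmem β hβ).1
  · exact root_le_pi_div_two_mul_sqrt hβ hc (hmem β hβ) (hroot β hβ)

theorem tendsto_root_mul_sqrt_atTop {τstar : ℝ → ℝ} (hc : 0 < c)
    (hmem : ∀ β > 0, τstar β ∈ Ico 0 (π / 2))
    (hroot : ∀ β > 0, β * sin (τstar β) ^ 2 = c * cos (τstar β)) :
    Tendsto (fun β => τstar β * √(β / c)) atTop (𝓝 1) := by
  have hcont : Tendsto (fun x => √(cos x) / sinc x) (𝓝 0) (𝓝 1) := by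
    simpa [Pi.div_def] using
      (continuous_cos.sqrt.tendsto 0).div (continuous_sinc.tendsto 0) (by simp)
  refine (hcont.comp (tendsto_root_atTop_zero hc hmem hroot)).congr' ?_
  filter_upwards [eventually_gt_atTop 0] with β hβ
  exact (root_mul_sqrt_eq_sqrt_cos_div_sinc hc (hmem β hβ) (hroot β hβ)).symm

end CriticalAngle

/-- For `d ≥ 2`, if `τ* : (0,∞) → [0, π/2)` picks for each `β > 0` a solution of
`β sin² τ = (d-1) cos τ`, then: this solution is unique in `[0, π/2)`;
`g(τ) < 0` for all `τ ∈ [0,π]` with `τ > τ*_β`; `τ*` is strictly decreasing in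
`β`; and `τ*_β √(β/(d-1)) → 1` as `β → ∞`. -/
theorem stmt_19 (d : ℕ) (hd : 2 ≤ d) (τstar : ℝ → ℝ)
    (hmem : ∀ β > 0, τstar β ∈ Ico (0 : ℝ) (π / 2))
    (heq : ∀ β > 0, β * sin (τstar β) ^ 2 = ((d : ℝ) - 1) * cos (τstar β)) :
    (∀ β > 0, ∀ τ ∈ Ico (0 : ℝ) (π / 2),
        β * sin τ ^ 2 = ((d : ℝ) - 1) * cos τ → τ = τstar β) ∧
    (∀ β > 0, ∀ τ ∈ Icc (0 : ℝ) π, τstar β < τ → hessKernel d β τ < 0) ∧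
    StrictAntiOn τstar (Ioi (0 : ℝ)) ∧
    Tendsto (fun β => τstar β * Real.sqrt (β / ((d : ℝ) - 1))) atTop (nhds 1) := by
  have hc : (0 : ℝ) < (d : ℝ) - 1 := by
    have : (2 : ℝ) ≤ d := by exact_mod_cast hd
    linarith
  refine ⟨?_, ?_, ?_, tendsto_root_mul_sqrt_atTop hc hmem heq⟩
  · intro β hβ τ hτ hroot
    exact eq_of_mul_sin_sq_eq_mul_cos hβ.le hc (Ico_subset_Icc_self hτ)
      (Ico_subset_Icc_self (hmem β hβ)) hroot (heq β hβ)
  · intro β hβ τ hτ hlt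
    exact mul_neg_of_pos_of_neg (exp_pos _) <| mul_cos_sub_mul_sin_sq_neg hβ.le hc
      (Ico_subset_Icc_self (hmem β hβ)) (heq β hβ) hlt hτ.2
  · intro β₁ hβ₁ β₂ hβ₂ hβ
    exact root_lt_root_of_lt hβ₁ hβ hc (hmem β₁ hβ₁) (hmem β₂ hβ₂) (heq β₁ hβ₁) (heq β₂ hβ₂)
end
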